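/- Let M, K, Z, C be finite discrete random variables with C = M ⊕ K (addition in ZMod n), M uniform on ZMod n and independent of (K,Z). Then I(M; C, Z) ≤ log n - H(K | Z). -/
import Mathlib


open scoped BigOperators
open Classical

noncomputable section

variable {Ω : Type} [Fintype Ω]

/-- Probability that the random variable `X` equals `x` under the pmf `p`. -/
def prEq {α : Type} (p : Ω → ℝ) (X : Ω → α) (x : α) : ℝ :=
  ∑ ω, if X ω = x then p ω else 0

/-- `p` is a probability mass function on `Ω`. -/
def IsPMF (p : Ω → ℝ) : Prop := (∀ ω, 0 ≤ p ω) ∧ ∑ ω, p ω = 1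

/-- Shannon entropy (natural logarithm). -/
def H {α : Type} [Fintype α] (p : Ω → ℝ) (X : Ω → α) : ℝ :=
  -∑ x, prEq p X x * Real.log (prEq p X x)

/-- Conditional entropy `H(X|Y)`. -/
def condH {α β : Type} [Fintype α] [Fintype β] (p : Ω → ℝ) (X : Ω → α) (Y : Ω → β) : ℝ :=
  H p (fun ω => (X ω, Y ω)) - H p Y

/-- Mutual information `I(X;Y)`. -/
def mi {α β : Type} [Fintype α] [Fintype β] (p : Ω → ℝ) (X : Ω → α) (Y : Ω → β) : ℝ :=
  H p X + H p Y - H p (fun ω => (X ω, Y ω))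

/-- Conditional mutual information `I(X;Y|Z)`. -/
def cmi {α β γ : Type} [Fintype α] [Fintype β] [Fintype γ]
    (p : Ω → ℝ) (X : Ω → α) (Y : Ω → β) (Z : Ω → γ) : ℝ :=
  condH p X Z - condH p X (fun ω => (Y ω, Z ω))

/-- `A` and `C` are conditionally independent given `B` (Markov chain `A → B → C`). -/
def CondIndep {α β γ : Type} (p : Ω → ℝ) (A : Ω → α) (B : Ω → β) (C : Ω → γ) : Prop :=
  ∀ a b c, prEq p (fun ω => (A ω, B ω, C ω)) (a, b, c) * prEq p B b =
    prEq p (fun ω => (A ω, B ω)) (a, b) * prEq p (fun ω => (C ω, B ω)) (c, b)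

/-- `A` and `B` are independent. -/
def Indep {α β : Type} (p : Ω → ℝ) (A : Ω → α) (B : Ω → β) : Prop :=
  ∀ a b, prEq p (fun ω => (A ω, B ω)) (a, b) = prEq p A a * prEq p B b

/-- `X` is uniformly distributed. -/
def Uniform {α : Type} [Fintype α] (p : Ω → ℝ) (X : Ω → α) : Prop :=
  ∀ x, prEq p X x = 1 / (Fintype.card α : ℝ)

/- ---------- auxiliary lemmas ---------- -/

lemma prEq_nonneg' {α : Type} {p : Ω → ℝ} (hp : ∀ ω, 0 ≤ p ω) (X : Ω → α) (x : α) :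
    0 ≤ prEq p X x :=
  Finset.sum_nonneg fun ω _ => by by_cases h : X ω = x <;> simp [h, hp ω]

lemma sum_prEq' {α : Type} [Fintype α] (p : Ω → ℝ) (X : Ω → α) :
    ∑ x, prEq p X x = ∑ ω, p ω := by
  unfold prEq
  rw [Finset.sum_comm]
  exact Finset.sum_congr rfl fun ω _ => by simp

lemma prEq_marginal' {α β : Type} [Fintype α] (p : Ω → ℝ) (X : Ω → α) (Y : Ω → β) (y : β) :
    ∑ x, prEq p (fun ω => (X ω, Y ω)) (x, y) = prEq p Y y := by
  unfold prEq
  rw [Finset.sum_comm]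
  refine Finset.sum_congr rfl fun ω _ => ?_
  by_cases h : Y ω = y <;> simp [Prod.ext_iff, h]

lemma prEq_le_marginal' {α β : Type} [Fintype α] {p : Ω → ℝ} (hp : ∀ ω, 0 ≤ p ω)
    (X : Ω → α) (Y : Ω → β) (x : α) (y : β) :
    prEq p (fun ω => (X ω, Y ω)) (x, y) ≤ prEq p Y y := by
  rw [← prEq_marginal' p X Y y]
  exact Finset.single_le_sum (f := fun x => prEq p (fun ω => (X ω, Y ω)) (x, y))
    (fun i _ => prEq_nonneg' hp _ _) (Finset.mem_univ x)

/-- Gibbs' inequality / cross-entropy bound. -/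
lemma gibbs' {ι : Type} [Fintype ι] (f g : ι → ℝ)
    (hf : ∀ i, 0 ≤ f i) (hg : ∀ i, 0 ≤ g i)
    (hfg : ∀ i, g i = 0 → f i = 0)
    (hsum : ∑ i, g i ≤ ∑ i, f i) :
    -∑ i, f i * Real.log (f i) ≤ -∑ i, f i * Real.log (g i) := by
  rw [neg_le_neg_iff]
  have key : ∀ i, f i * Real.log (g i) - f i * Real.log (f i) ≤ g i - f i := by
    intro i
    rcases eq_or_lt_of_le (hf i) with h0 | h0
    · simp [← h0, hg i]
    · have hgpos : 0 < g i := by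
        rcases eq_or_lt_of_le (hg i) with h1 | h1
        · exact absurd (hfg i h1.symm) (ne_of_gt h0)
        · exact h1
      have hlog : Real.log (g i / f i) ≤ g i / f i - 1 :=
        Real.log_le_sub_one_of_pos (div_pos hgpos h0)
      rw [Real.log_div (ne_of_gt hgpos) (ne_of_gt h0)] at hlog
      have := mul_le_mul_of_nonneg_left hlog (le_of_lt h0)
      calc f i * Real.log (g i) - f i * Real.log (f i)
          = f i * (Real.log (g i) - Real.log (f i)) := by ring
        _ ≤ f i * (g i / f i - 1) := this
        _ = g i - f i := by field_simp
  have hsum2 : ∑ i, (f i * Real.log (g i) - f i * Real.log (f i)) ≤ ∑ i, (g i - f i) :=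
    Finset.sum_le_sum fun i _ => key i
  rw [Finset.sum_sub_distrib, Finset.sum_sub_distrib] at hsum2
  linarith

/-- Entropy is invariant under an injective recoding of the value. -/
lemma H_comp_equiv' {α β : Type} [Fintype α] [Fintype β] (p : Ω → ℝ)
    (X : Ω → α) (e : α ≃ β) :
    H p (fun ω => e (X ω)) = H p X := by
  unfold H
  congr 1
  have hpr : ∀ a, prEq p (fun ω => e (X ω)) (e a) = prEq p X a := fun a => by
    unfold prEq
    exact Finset.sum_congr rfl fun ω _ => by simp [e.apply_eq_iff_eq]
  rw [← Equiv.sum_comp e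
    (fun b => prEq p (fun ω => e (X ω)) b * Real.log (prEq p (fun ω => e (X ω)) b))]
  exact Finset.sum_congr rfl fun a _ => by rw [hpr a]

/-- Entropy of a pair of independent variables. -/
lemma H_indep' {α β : Type} [Fintype α] [Fintype β] {p : Ω → ℝ} (hp : IsPMF p)
    {X : Ω → α} {Y : Ω → β} (h : Indep p X Y) :
    H p (fun ω => (X ω, Y ω)) = H p X + H p Y := by
  have hXs : ∑ a, prEq p X a = 1 := by rw [sum_prEq']; exact hp.2
  have hYs : ∑ b, prEq p Y b = 1 := by rw [sum_prEq']; exact hp.2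
  have key : ∀ a b, prEq p (fun ω => (X ω, Y ω)) (a, b) *
        Real.log (prEq p (fun ω => (X ω, Y ω)) (a, b))
      = prEq p X a * Real.log (prEq p X a) * prEq p Y b
        + prEq p X a * (prEq p Y b * Real.log (prEq p Y b)) := by
    intro a b
    rw [h a b]
    by_cases hxa : prEq p X a = 0
    · simp [hxa]
    by_cases hyb : prEq p Y b = 0
    · simp [hyb]
    rw [Real.log_mul hxa hyb]; ring
  unfold H
  rw [Fintype.sum_prod_type]
  have : ∀ a ∈ Finset.univ, (∑ b, prEq p (fun ω => (X ω, Y ω)) (a, b) *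
        Real.log (prEq p (fun ω => (X ω, Y ω)) (a, b)))
      = prEq p X a * Real.log (prEq p X a)
        + prEq p X a * (∑ b, prEq p Y b * Real.log (prEq p Y b)) := by
    intro a _
    rw [Finset.sum_congr rfl fun b _ => key a b, Finset.sum_add_distrib,
      ← Finset.mul_sum, ← Finset.mul_sum]
    rw [hYs]
    ring
  rw [Finset.sum_congr rfl this, Finset.sum_add_distrib, ← Finset.sum_mul, hXs]
  ring

lemma H_uniform' {α : Type} [Fintype α] [Nonempty α] (p : Ω → ℝ) (X : Ω → α)
    (h : Uniform p X) : H p X = Real.log (Fintype.card α) := by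
  have hc : (0 : ℝ) < (Fintype.card α : ℝ) := by
    exact_mod_cast Fintype.card_pos
  unfold H
  have h' : ∀ x, prEq p X x = 1 / (Fintype.card α : ℝ) := h
  simp_rw [h', one_div, Real.log_inv]
  rw [Finset.sum_const, Finset.card_univ, nsmul_eq_mul]
  field_simp

/-- The shear bijection `(m,(k,z)) ↦ (m,(m+k,z))`. -/
def shearEquiv (n : ℕ) (𝒵 : Type) : (ZMod n × (ZMod n × 𝒵)) ≃ (ZMod n × (ZMod n × 𝒵)) where
  toFun x := (x.1, (x.1 + x.2.1, x.2.2))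
  invFun x := (x.1, (x.2.1 - x.1, x.2.2))
  left_inv x := by simp
  right_inv x := by simp

/-- with C = M ⊕ K, M uniform and independent of (K,Z),
I(M;C,Z) ≤ log n - H(K|Z). -/
theorem stmt_7 (n : ℕ) [NeZero n] {𝒵 : Type} [Fintype 𝒵]
    (p : Ω → ℝ) (hp : IsPMF p)
    (M K : Ω → ZMod n) (Z : Ω → 𝒵)
    (hM : Uniform p M) (hMKZ : Indep p M (fun ω => (K ω, Z ω)))
    (C : Ω → ZMod n) (hC : C = fun ω => M ω + K ω) :
    mi p M (fun ω => (C ω, Z ω)) ≤ Real.log n - condH p K Z := by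
  have hplog : Real.log n = Real.log (Fintype.card (ZMod n)) := by rw [ZMod.card]
  -- H(M) = log n
  have hHM : H p M = Real.log n := by
    rw [H_uniform' p M hM, ZMod.card]
  -- H(M,(C,Z)) = H(M) + H(K,Z)
  have hjoint : H p (fun ω => (M ω, (C ω, Z ω))) = H p M + H p (fun ω => (K ω, Z ω)) := by
    have : (fun ω => (M ω, (C ω, Z ω))) = fun ω => shearEquiv n 𝒵 (M ω, (K ω, Z ω)) := by
      funext ω; simp [shearEquiv, hC]
    rw [this, H_comp_equiv' p (fun ω => (M ω, (K ω, Z ω))) (shearEquiv n 𝒵)]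
    exact H_indep' hp hMKZ
  -- H(C,Z) ≤ log n + H(Z)
  have hkey : H p (fun ω => (C ω, Z ω)) ≤ Real.log n + H p Z := by
    set f : ZMod n × 𝒵 → ℝ := fun q => prEq p (fun ω => (C ω, Z ω)) q with hf_def
    set g : ZMod n × 𝒵 → ℝ := fun q => (1 / (n : ℝ)) * prEq p Z q.2 with hg_def
    have hn : (0 : ℝ) < (n : ℝ) := by exact_mod_cast Nat.pos_of_ne_zero (NeZero.ne n)
    have hf : ∀ q, 0 ≤ f q := fun q => prEq_nonneg' hp.1 _ _
    have hg : ∀ q, 0 ≤ g q := fun q =>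
      mul_nonneg (by positivity) (prEq_nonneg' hp.1 _ _)
    have hfz : ∀ q : ZMod n × 𝒵, prEq p Z q.2 = 0 → f q = 0 := by
      intro q hq
      have h1 : f q ≤ prEq p Z q.2 := prEq_le_marginal' hp.1 C Z q.1 q.2
      exact le_antisymm (hq ▸ h1) (hf q)
    have hfg : ∀ q, g q = 0 → f q = 0 := by
      intro q hq
      have : prEq p Z q.2 = 0 := by
        rcases mul_eq_zero.mp hq with h | h
        · exact absurd h (by positivity)
        · exact h
      exact hfz q this
    have hfs : ∑ q, f q = 1 := by rw [hf_def, sum_prEq']; exact hp.2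
    have hgs : ∑ q, g q = 1 := by
      rw [hg_def]
      rw [Fintype.sum_prod_type]
      simp only
      rw [Finset.sum_const, Finset.card_univ, ZMod.card]
      rw [← Finset.mul_sum, sum_prEq', hp.2, mul_one, nsmul_eq_mul]
      field_simp
    have hgibbs := gibbs' f g hf hg hfg (by rw [hfs, hgs])
    have hcross : -∑ q, f q * Real.log (g q) = Real.log n + H p Z := by
      have key : ∀ q : ZMod n × 𝒵, f q * Real.log (g q)
          = f q * Real.log (1 / (n : ℝ)) + f q * Real.log (prEq p Z q.2) := by
        intro q
        by_cases hz : prEq p Z q.2 = 0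
        · simp [hfz q hz]
        · rw [hg_def]
          simp only
          rw [Real.log_mul (by positivity) hz]
          ring
      rw [Finset.sum_congr rfl fun q _ => key q, Finset.sum_add_distrib,
        ← Finset.sum_mul, hfs, one_mul]
      have h2 : ∑ q : ZMod n × 𝒵, f q * Real.log (prEq p Z q.2)
          = ∑ z, prEq p Z z * Real.log (prEq p Z z) := by
        rw [Fintype.sum_prod_type_right]
        refine Finset.sum_congr rfl fun z _ => ?_
        have e1 : (∑ x : ZMod n, f (x, z) * Real.log (prEq p Z (x, z).2))
            = ∑ x : ZMod n, prEq p (fun ω => (C ω, Z ω)) (x, z) * Real.log (prEq p Z z) :=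
          Finset.sum_congr rfl fun x _ => rfl
        rw [e1, ← Finset.sum_mul, prEq_marginal' p C Z z]
      rw [h2, one_div, Real.log_inv]
      unfold H
      ring
    calc H p (fun ω => (C ω, Z ω)) = -∑ q, f q * Real.log (f q) := rfl
      _ ≤ -∑ q, f q * Real.log (g q) := hgibbs
      _ = Real.log n + H p Z := hcross
  -- put everything together
  unfold mi
  rw [hjoint]
  unfold condH
  have hHKZ := H p (fun ω => (K ω, Z ω))
  linarith
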